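/- Let $p$ be an odd prime. Then there is no subgroup $G\le S_{p+2}$ which is solvable, primitive in its natural action on $\{1,\dots,p+2\}$, and contains a permutation that is a single cycle of length $p$ (thus fixing exactly two points). -/

import Mathlib

/-- A subgroup of `Sₙ` is primitive if its natural action on `{1, …, n}` is transitive
and every block of the action is trivial (a subsingleton or everything). -/
def Subgroup.IsPrimitivePerm {n : ℕ} (G : Subgroup (Equiv.Perm (Fin n))) : Prop :=
  MulAction.IsPretransitive G (Fin n) ∧
    ∀ B : Set (Fin n), MulAction.IsBlock G B → B.Subsingleton ∨ B = Set.univ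

/-! The last nontrivial term `N` of the derived series of a solvable group is an abelian normal
subgroup; in a primitive group it is transitive, and an abelian transitive permutation group is
regular. For `g` fixing a point `a`, the map `n ↦ n • a` then identifies the centralizer of `g`
in `N` with the fixed points of `g`, so by Lagrange the number of fixed points of `g` divides
`|N| = p + 2`. A `p`-cycle in `S_{p+2}` has exactly two fixed points, while `p + 2` is odd. -/

open MulAction

theorem Subgroup.IsPrimitivePerm.isPreprimitive {n : ℕ} {G : Subgroup (Equiv.Perm (Fin n))}
    (hG : G.IsPrimitivePerm) : IsPreprimitive G (Fin n) :=
  haveI := hG.1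
  { isTrivialBlock_of_isBlock := fun hB => hG.2 _ hB }

theorem IsSolvable.exists_normal_isMulCommutative_ne_bot (G : Type*) [Group G]
    [Group.IsSolvable G] [Nontrivial G] :
    ∃ N : Subgroup G, N.Normal ∧ N ≠ ⊥ ∧ IsMulCommutative N := by
  classical
  have hex : ∃ n, derivedSeries G n = ⊥ := Group.IsSolvable.solvable
  obtain ⟨k, hk⟩ : ∃ k, Nat.find hex = k + 1 := Nat.exists_eq_succ_of_ne_zero fun h => by
    simpa [h] using Nat.find_spec hex
  refine ⟨derivedSeries G k, derivedSeries_normal G k, Nat.find_min hex (by omega), ?_⟩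
  rw [← Subgroup.le_centralizer_iff_isMulCommutative,
    ← Subgroup.commutator_eq_bot_iff_le_centralizer, ← derivedSeries_succ, ← hk]
  exact Nat.find_spec hex

section RegularNormalSubgroup

variable {G X : Type*} [Group G] [MulAction G X]

theorem fixedPoints_ne_univ_of_ne_bot [FaithfulSMul G X] {N : Subgroup G} (hN : N ≠ ⊥) :
    fixedPoints N X ≠ Set.univ := by
  obtain ⟨n, hn⟩ := Subgroup.ne_bot_iff_exists_ne_one.mp hN
  intro h
  refine hn ((fixedBy_eq_univ_iff_eq_one (α := X)).mp (Set.eq_univ_of_forall fun x => ?_))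
  exact (Set.eq_univ_iff_forall.mp h x) n

theorem injective_smul_of_isMulCommutative [FaithfulSMul G X] (N : Subgroup G)
    [IsMulCommutative N] [IsPretransitive N X] (a : X) :
    Function.Injective fun n : N => n • a := by
  intro n m h
  refine FaithfulSMul.eq_of_smul_eq_smul (α := X) fun x => ?_
  obtain ⟨c, rfl⟩ := exists_smul_eq N a x
  rw [smul_smul, smul_smul, mul_comm' n, mul_comm' m, mul_smul, mul_smul]
  exact congrArg (c • ·) h

/-- Via `n ↦ n • a`, the fixed points of `g` correspond to the centralizer of `g` in `N`. -/
theorem card_fixedBy_dvd_card {N : Subgroup G} [N.Normal] [IsPretransitive N X]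
    (hreg : ∀ a : X, Function.Injective fun n : N => n • a) {g : G} {a : X} (ha : g • a = a) :
    Nat.card (fixedBy X g) ∣ Nat.card X := by
  set C := (Subgroup.centralizer {g}).subgroupOf N
  have hmem : ∀ n : N, n ∈ C ↔ g • (n • a) = n • a := by
    intro n
    rw [Subgroup.mem_subgroupOf, Subgroup.mem_centralizer_singleton_iff, Subgroup.smul_def,
      smul_smul]
    constructor
    · intro hn
      rw [← hn, mul_smul, ha]
    · intro hn
      have hconj : g * n * g⁻¹ ∈ N := ‹N.Normal›.conj_mem _ n.2 g
      have : (⟨g * n * g⁻¹, hconj⟩ : N) = n := hreg a <| by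
        simp only [Subgroup.mk_smul, mul_smul, inv_smul_eq_iff.mpr ha.symm]
        exact (smul_smul g n a).trans hn
      exact (mul_inv_eq_iff_eq_mul.mp (congrArg Subtype.val this)).symm
  have hC : Nat.card C = Nat.card (fixedBy X g) := by
    refine Nat.card_eq_of_bijective (fun n : C => ⟨(n : N) • a, (hmem n).1 n.2⟩) ⟨?_, ?_⟩
    · intro n m h
      exact Subtype.ext (hreg a (congrArg Subtype.val h))
    · rintro ⟨x, hx⟩
      obtain ⟨n, rfl⟩ := exists_smul_eq N a x
      exact ⟨⟨n, (hmem n).2 hx⟩, rfl⟩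
  have hN : Nat.card N = Nat.card X :=
    Nat.card_eq_of_bijective _ ⟨hreg a, surjective_smul N a⟩
  rw [← hC, ← hN]
  exact Subgroup.card_subgroup_dvd_card C

end RegularNormalSubgroup

theorem Equiv.Perm.card_fixedBy {α : Type*} [Fintype α] [DecidableEq α] (σ : Equiv.Perm α) :
    Nat.card (fixedBy α σ) = Fintype.card α - σ.support.card := by
  have : fixedBy α σ = ↑σ.supportᶜ := by
    ext x
    simp
  rw [this, Nat.card_coe_set_eq, Set.ncard_coe_finset, Finset.card_compl]

theorem no_solvable_primitive_with_p_cycle_fixing_two_general (p : ℕ)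
    (hodd : Odd p) :
    ¬ ∃ G : Subgroup (Equiv.Perm (Fin (p + 2))), IsSolvable G ∧ G.IsPrimitivePerm ∧
        ∃ σ : Equiv.Perm (Fin (p + 2)), σ ∈ G ∧ σ.IsCycle ∧ σ.support.card = p := by
  rintro ⟨G, hsolv, hprim, σ, hσG, -, hcard⟩
  have : IsPreprimitive G (Fin (p + 2)) := hprim.isPreprimitive
  have hfix : Nat.card (fixedBy (Fin (p + 2)) (⟨σ, hσG⟩ : G)) = 2 := by
    change Nat.card (fixedBy (Fin (p + 2)) σ) = 2
    rw [σ.card_fixedBy, hcard, Fintype.card_fin, Nat.add_sub_cancel_left]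
  have : Nontrivial G := nontrivial_of_ne ⟨σ, hσG⟩ 1 fun h => by
    simp_all [hodd.pos.ne']
  have : Group.IsSolvable G := hsolv
  obtain ⟨N, hN, hNbot, hNcomm⟩ := IsSolvable.exists_normal_isMulCommutative_ne_bot G
  have : IsPretransitive N (Fin (p + 2)) :=
    IsQuasiPreprimitive.isPretransitive_of_normal (fixedPoints_ne_univ_of_ne_bot hNbot)
  obtain ⟨⟨a, ha⟩⟩ : Nonempty (fixedBy (Fin (p + 2)) (⟨σ, hσG⟩ : G)) :=
    (Nat.card_pos_iff.mp (by omega)).1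
  have hdvd := card_fixedBy_dvd_card (injective_smul_of_isMulCommutative N) ha
  rw [hfix, Nat.card_eq_fintype_card, Fintype.card_fin, Nat.dvd_add_self_right] at hdvd
  exact Nat.not_even_iff_odd.mpr hodd (even_iff_two_dvd.mpr hdvd)

/-- For an odd prime `p`, there is no solvable primitive subgroup of `S_{p+2}`
containing a permutation that is a single cycle of length `p`. -/
theorem no_solvable_primitive_with_p_cycle_fixing_two (p : ℕ) (hp : p.Prime)
    (hodd : Odd p) :
    ¬ ∃ G : Subgroup (Equiv.Perm (Fin (p + 2))), IsSolvable G ∧ G.IsPrimitivePerm ∧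
        ∃ σ : Equiv.Perm (Fin (p + 2)), σ ∈ G ∧ σ.IsCycle ∧ σ.support.card = p :=
  no_solvable_primitive_with_p_cycle_fixing_two_general p hodd
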